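/- Let M be a simple matroid and k a finite commutative ring. Let σ ∈ k^M be the constant function 1, and define the cocycle space Z_k(M) = {τ ∈ k^M : for each rank-2 flat X and each v ∈ X, ∑_{u∈X} τ_u = |X|·τ_v}. Let Z'_k(M) be the functions whose restriction to every rank-2 flat is constant or bijective. If the sum of all elements of k is 0, then Z'_k(M) ⊆ Z_k(M); otherwise Z'_k(M) ∩ Z_k(M) equals the set of constant functions. -/

import Mathlib

/-! On a line `X` where `τ` is a bijection onto `K`, both sides of the cocycle condition are
computed by `K` itself: `∑_{u ∈ X} τ u = Σ(K)`, while `|X| · τ v = |K| · τ v = 0` because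
`|K| = 0` in a finite ring. So such a line satisfies the cocycle condition exactly when
`Σ(K) = 0`, and on lines where `τ` is constant it always holds. When `Σ(K) ≠ 0`, a function in
`Z'_K(M) ∩ Z_K(M)` is therefore constant on every line, and since in a simple matroid any two
points lie on a common line, it is constant. -/

open Set

/-- A matroid is simple if every subset of its ground set of size at most two is
independent. -/
def Matroid.IsSimpleMatroid {α : Type} (M : Matroid α) : Prop :=
  ∀ S : Set α, S ⊆ M.E → S.ncard ≤ 2 → M.Indep S

/-- A line (rank-2 flat) of a matroid: a flat having a basis of size two. -/
def Matroid.IsLine {α : Type} (M : Matroid α) (F : Set α) : Prop :=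
  M.IsFlat F ∧ ∃ I, M.IsBasis I F ∧ I.ncard = 2

lemma finsum_mem_eq_ncard_mul {α R : Type*} [Semiring R] {X : Set α} {f : α → R} {a : R}
    (h : ∀ u ∈ X, f u = a) : ∑ᶠ u ∈ X, f u = X.ncard * a := by
  rw [finsum_mem_congr rfl h]
  obtain hX | hX := X.infinite_or_finite
  · rw [hX.ncard, Nat.cast_zero, zero_mul]
    by_cases ha : a = 0
    · simp [ha]
    · exact finsum_mem_eq_zero_of_infinite (by simpa [Function.support_const ha])
  · rw [finsum_mem_eq_finite_toFinset_sum _ hX, Finset.sum_const, nsmul_eq_mul,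
      ncard_eq_toFinset_card X hX]

section BijOnUniv

variable {α K : Type*} [Fintype K] {τ : α → K} {X : Set α}

lemma finsum_mem_eq_sum_univ_of_bijOn [AddCommMonoid K] (h : BijOn τ X univ) :
    ∑ᶠ u ∈ X, τ u = ∑ x : K, x := by
  rw [finsum_mem_eq_of_bijOn (g := fun x : K => x) τ h fun _ _ => rfl, finsum_mem_univ,
    finsum_eq_sum_of_fintype]

lemma ncard_eq_card_of_bijOn (h : BijOn τ X univ) : X.ncard = Fintype.card K := by
  rw [h.ncard_eq, ncard_univ, Nat.card_eq_fintype_card]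

lemma finsum_mem_eq_ncard_mul_iff_of_bijOn [Ring K] (h : BijOn τ X univ) (a : K) :
    ∑ᶠ u ∈ X, τ u = X.ncard * a ↔ ∑ x : K, x = 0 := by
  rw [finsum_mem_eq_sum_univ_of_bijOn h, ncard_eq_card_of_bijOn h, Nat.cast_card_eq_zero,
    zero_mul]

end BijOnUniv

namespace Matroid

variable {α : Type} {M : Matroid α}

lemma IsSimpleMatroid.isLine_closure_pair (hs : M.IsSimpleMatroid)
    {u v : α} (hu : u ∈ M.E) (hv : v ∈ M.E) (huv : u ≠ v) : M.IsLine (M.closure {u, v}) := by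
  have hcard : ({u, v} : Set α).ncard = 2 := ncard_pair huv
  have hind : M.Indep {u, v} := hs _ (pair_subset hu hv) hcard.le
  exact ⟨M.isFlat_closure _, {u, v}, hind.isBasis_closure, hcard⟩

lemma IsSimpleMatroid.eq_of_forall_isLine {β : Type*} (hs : M.IsSimpleMatroid)
    {τ : α → β} (hτ : ∀ X, M.IsLine X → ∀ u ∈ X, ∀ v ∈ X, τ u = τ v)
    {u v : α} (hu : u ∈ M.E) (hv : v ∈ M.E) : τ u = τ v := by
  obtain rfl | huv := eq_or_ne u v
  · rfl
  have hsub : ({u, v} : Set α) ⊆ M.E := pair_subset hu hv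
  exact hτ _ (hs.isLine_closure_pair hu hv huv) u (M.mem_closure_of_mem (by simp) hsub)
    v (M.mem_closure_of_mem (by simp) hsub)

end Matroid

theorem special_cocycles_vs_cocycles_general (α : Type)
    (M : Matroid α) (hE : M.E = Set.univ) (hs : M.IsSimpleMatroid)
    (K : Type) [CommRing K] [Fintype K] :
    ((∑ x : K, x) = 0 →
      {τ : α → K | ∀ X : Set α, M.IsLine X →
          ((∀ u ∈ X, ∀ v ∈ X, τ u = τ v) ∨ Set.BijOn τ X Set.univ)} ⊆
        {τ : α → K | ∀ X : Set α, M.IsLine X → ∀ v ∈ X,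
          (∑ᶠ u ∈ X, τ u) = (X.ncard : K) * τ v}) ∧
    ((∑ x : K, x) ≠ 0 →
      {τ : α → K | ∀ X : Set α, M.IsLine X →
          ((∀ u ∈ X, ∀ v ∈ X, τ u = τ v) ∨ Set.BijOn τ X Set.univ)} ∩
        {τ : α → K | ∀ X : Set α, M.IsLine X → ∀ v ∈ X,
          (∑ᶠ u ∈ X, τ u) = (X.ncard : K) * τ v} =
        {τ : α → K | ∃ a : K, ∀ u, τ u = a}) := by
  refine ⟨fun hsum τ hτ X hX v hv => ?_, fun hsum => ?_⟩
  · rcases hτ X hX with hconst | hbij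
    · exact finsum_mem_eq_ncard_mul fun u hu => hconst u hu v hv
    · exact (finsum_mem_eq_ncard_mul_iff_of_bijOn hbij _).2 hsum
  ext τ
  refine ⟨fun ⟨hspecial, hcocycle⟩ => ?_, fun ⟨a, ha⟩ => ?_⟩
  · have hconst : ∀ X, M.IsLine X → ∀ u ∈ X, ∀ v ∈ X, τ u = τ v := by
      intro X hX
      refine (hspecial X hX).resolve_right fun hbij => hsum ?_
      obtain ⟨v, hv⟩ := hbij.surjOn (mem_univ 0)
      exact (finsum_mem_eq_ncard_mul_iff_of_bijOn hbij _).1 (hcocycle X hX _ hv.1)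
    rcases isEmpty_or_nonempty α with _ | ⟨⟨u₀⟩⟩
    · exact ⟨0, isEmptyElim⟩
    · exact ⟨τ u₀, fun u => hs.eq_of_forall_isLine hconst (hE ▸ mem_univ u) (hE ▸ mem_univ u₀)⟩
  · exact ⟨fun X _ => Or.inl fun u _ v _ => by rw [ha, ha],
      fun X _ v _ => by rw [ha v]; exact finsum_mem_eq_ncard_mul fun u _ => ha u⟩

/-- Let `M` be a simple matroid and `K` a finite commutative ring.  Let `Z_K(M)` be
the cocycle space: functions `τ` such that for every rank-2 flat `X` and `v ∈ X`,
`∑_{u ∈ X} τ u = |X| · τ v`; and let `Z'_K(M)` be the special cocycles: functions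
whose restriction to every rank-2 flat is constant or bijective.  If `Σ(K) = 0`
then `Z'_K(M) ⊆ Z_K(M)`; otherwise `Z'_K(M) ∩ Z_K(M)` is the set of constant
functions. -/
theorem special_cocycles_vs_cocycles (α : Type) [Fintype α]
    (M : Matroid α) (hE : M.E = Set.univ) (hs : M.IsSimpleMatroid)
    (K : Type) [CommRing K] [Fintype K] :
    ((∑ x : K, x) = 0 →
      {τ : α → K | ∀ X : Set α, M.IsLine X →
          ((∀ u ∈ X, ∀ v ∈ X, τ u = τ v) ∨ Set.BijOn τ X Set.univ)} ⊆
        {τ : α → K | ∀ X : Set α, M.IsLine X → ∀ v ∈ X,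
          (∑ᶠ u ∈ X, τ u) = (X.ncard : K) * τ v}) ∧
    ((∑ x : K, x) ≠ 0 →
      {τ : α → K | ∀ X : Set α, M.IsLine X →
          ((∀ u ∈ X, ∀ v ∈ X, τ u = τ v) ∨ Set.BijOn τ X Set.univ)} ∩
        {τ : α → K | ∀ X : Set α, M.IsLine X → ∀ v ∈ X,
          (∑ᶠ u ∈ X, τ u) = (X.ncard : K) * τ v} =
        {τ : α → K | ∃ a : K, ∀ u, τ u = a}) :=
  special_cocycles_vs_cocycles_general α M hE hs K
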